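/- arXiv:2302.04209 — 2 statements merged into one kernel-verified Lean document; each statement's English description precedes it below -/
import Mathlib

section
/- Let P ∈ ℝ[x,y] have degree d ≥ 1 with P_x ≠ 0 and P_y ≠ 0, and let Q ∈ ℝ[x,y]. Then for every integer j ≥ 1 there exist polynomials Q_{xj}, Q_{yj} ∈ ℝ[x,y] such that, in the field ℝ(x,y) of rational functions, L_x^j Q = Q_{xj}/P_y^{2j−1} and L_y^j Q = Q_{yj}/P_x^{2j−1}, with deg Q_{xj} ≤ deg Q + 2dj and deg Q_{yj} ≤ deg Q + 2dj. -/
/-!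
Multiplying by the denominator, `P_k · L q = J(q, P)` with `J(q, P) = q_i P_k - q_k P_i` the
Jacobian determinant, a polynomial of degree at most `deg q + d - 1`. If `L^j Q = N / P_k^m`,
the Leibniz rule gives `L^{j+1} Q = (P_k J(N, P) - m N J(P_k, P)) / P_k^{m+2}`: each step adds
2 to the exponent and at most `2d` to the degree of the numerator.
-/

open MvPolynomial

/-- The field `ℝ(x,y)` of rational functions in two variables. -/
abbrev RatFunc2 : Type := FractionRing (MvPolynomial (Fin 2) ℝ)

/-- The inclusion `ℝ[x,y] → ℝ(x,y)`. -/
noncomputable def toRF : MvPolynomial (Fin 2) ℝ →+* RatFunc2 :=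
  algebraMap (MvPolynomial (Fin 2) ℝ) RatFunc2

namespace MvPolynomial

section CommSemiring

variable {σ R : Type*} [CommSemiring R]

theorem totalDegree_pderiv_le [DecidableEq σ] (i : σ) (p : MvPolynomial σ R) :
    (pderiv i p).totalDegree ≤ p.totalDegree - 1 := by
  conv_lhs => rw [p.as_sum, map_sum]
  refine (totalDegree_finsetSum _ _).trans (Finset.sup_le fun v hv => ?_)
  rw [pderiv_monomial]
  by_cases hvi : v i = 0
  · simp [hvi]
  refine (totalDegree_monomial_le _ _).trans ?_
  have hle : Finsupp.single i 1 ≤ v :=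
    Finsupp.single_le_iff.mpr (Nat.one_le_iff_ne_zero.mpr hvi)
  have hsum : (v - Finsupp.single i 1).sum (fun _ e => e) + 1 = v.sum (fun _ e => e) := by
    conv_rhs => rw [← tsub_add_cancel_of_le hle]
    rw [Finsupp.sum_add_index' (fun _ => rfl) (fun _ _ _ => rfl), Finsupp.sum_single_index rfl]
  have := le_totalDegree hv
  simp only [Function.id_def]
  omega

end CommSemiring

section CommRing

variable {σ R : Type*} [CommRing R]

noncomputable def jacobian2 [DecidableEq σ] (i k : σ) (q P : MvPolynomial σ R) :
    MvPolynomial σ R :=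
  pderiv i q * pderiv k P - pderiv k q * pderiv i P

theorem totalDegree_jacobian2_le [DecidableEq σ] (i k : σ) (q P : MvPolynomial σ R) :
    (jacobian2 i k q P).totalDegree ≤ q.totalDegree + (P.totalDegree - 1) := by
  have hterm : ∀ a b : σ, (pderiv a q * pderiv b P).totalDegree ≤
      q.totalDegree + (P.totalDegree - 1) := fun a b =>
    (totalDegree_mul _ _).trans <| add_le_add
      ((totalDegree_pderiv_le a q).trans tsub_le_self) (totalDegree_pderiv_le b P)
  exact (totalDegree_sub _ _).trans (max_le (hterm i k) (hterm k i))

end CommRing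

end MvPolynomial

section Leibniz

variable {K : Type*} [Field K] {D : K → K}

theorem leibniz_one (hD : ∀ a b, D (a * b) = a * D b + D a * b) : D 1 = 0 := by
  simpa using hD 1 1

theorem mul_leibniz_pow (hD : ∀ a b, D (a * b) = a * D b + D a * b) (b : K) (n : ℕ) :
    b * D (b ^ n) = n * b ^ n * D b := by
  induction n with
  | zero => simp [leibniz_one hD]
  | succ n ih =>
    rw [pow_succ, hD]
    push_cast
    linear_combination b * ih

theorem leibniz_inv (hD : ∀ a b, D (a * b) = a * D b + D a * b) {b : K} (hb : b ≠ 0) :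
    D b⁻¹ = -D b / b ^ 2 := by
  have h := hD b b⁻¹
  rw [mul_inv_cancel₀ hb, leibniz_one hD] at h
  rw [eq_div_iff (pow_ne_zero 2 hb)]
  linear_combination -b * h - D b * mul_inv_cancel₀ hb

theorem leibniz_div_pow (hD : ∀ a b, D (a * b) = a * D b + D a * b) {r u ρ α : K}
    (hu : u ≠ 0) (hr : u * D r = ρ) (hα : u * D u = α) (m : ℕ) :
    D (r / u ^ m) = (u * ρ - m * r * α) / u ^ (m + 2) := by
  have hDr : D r = ρ / u := by rw [← hr]; field_simp
  have hDum : D (u ^ m) = m * u ^ m * α / u ^ 2 := by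
    rw [eq_div_iff (pow_ne_zero 2 hu), ← hα]
    linear_combination u * mul_leibniz_pow hD u m
  rw [div_eq_mul_inv, hD, leibniz_inv hD (pow_ne_zero m hu), hDr, hDum]
  field_simp
  ring

end Leibniz

section IteratedDerivation

variable {σ R K : Type*} [DecidableEq σ] [CommRing R] [Field K]
  (f : MvPolynomial σ R →+* K) {P : MvPolynomial σ R} {i k : σ} {D : K → K}

theorem mul_apply_eq_jacobian2 (hP : f (pderiv k P) ≠ 0)
    (hD : ∀ q, D (f q) = f (pderiv i q) - (f (pderiv i P) / f (pderiv k P)) * f (pderiv k q))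
    (q : MvPolynomial σ R) :
    f (pderiv k P) * D (f q) = f (jacobian2 i k q P) := by
  rw [hD, jacobian2, map_sub, map_mul, map_mul]
  field_simp

theorem exists_iterate_succ_eq_div_pow (hP : f (pderiv k P) ≠ 0)
    (hMul : ∀ a b, D (a * b) = a * D b + D a * b)
    (hD : ∀ q, D (f q) = f (pderiv i q) - (f (pderiv i P) / f (pderiv k P)) * f (pderiv k q))
    (Q : MvPolynomial σ R) (j : ℕ) :
    ∃ N : MvPolynomial σ R, D^[j + 1] (f Q) = f N / f (pderiv k P) ^ (2 * j + 1) ∧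
      N.totalDegree ≤ Q.totalDegree + 2 * P.totalDegree * (j + 1) := by
  have hJ := mul_apply_eq_jacobian2 f hP hD
  have hdegP := totalDegree_pderiv_le k P
  induction j with
  | zero =>
    refine ⟨jacobian2 i k Q P, ?_, ?_⟩
    · rw [Function.iterate_one, pow_one, eq_div_iff hP, mul_comm, hJ]
    · have := totalDegree_jacobian2_le i k Q P
      omega
  | succ j ih =>
    obtain ⟨N, hN, hNdeg⟩ := ih
    set g := pderiv k P
    refine ⟨g * jacobian2 i k N P - (2 * j + 1 : ℕ) • (N * jacobian2 i k g P), ?_, ?_⟩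
    · rw [Function.iterate_succ_apply', hN, leibniz_div_pow hMul hP (hJ N) (hJ g)]
      simp only [map_sub, map_mul, nsmul_eq_mul, map_natCast]
      push_cast
      ring
    · have hJN := totalDegree_jacobian2_le i k N P
      have hJg := totalDegree_jacobian2_le i k g P
      have hgJN := totalDegree_mul g (jacobian2 i k N P)
      have hNJg := totalDegree_mul N (jacobian2 i k g P)
      have hsmul := totalDegree_smul_le (2 * j + 1) (N * jacobian2 i k g P)
      have hsucc : 2 * P.totalDegree * (j + 1 + 1) =
          2 * P.totalDegree * (j + 1) + 2 * P.totalDegree := by ring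
      refine (totalDegree_sub _ _).trans (max_le ?_ ?_) <;> omega

end IteratedDerivation

theorem iterated_Lx_Ly_denominator_and_degree_bound_general
    (P : MvPolynomial (Fin 2) ℝ) (d : ℕ) (hd : d = P.totalDegree)
    (hPx : pderiv 0 P ≠ 0) (hPy : pderiv 1 P ≠ 0)
    (Q : MvPolynomial (Fin 2) ℝ)
    (Dx Dy : RatFunc2 → RatFunc2)
    -- `Dx` and `Dy` are derivations of `ℝ(x,y)` …
    (hDxMul : ∀ a b, Dx (a * b) = a * Dx b + Dx a * b)
    (hDyMul : ∀ a b, Dy (a * b) = a * Dy b + Dy a * b)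
    -- … which act on polynomials as `L_x = ∂/∂x - (P_x/P_y) ∂/∂y` and
    -- `L_y = ∂/∂y - (P_y/P_x) ∂/∂x` respectively:
    (hDx : ∀ q : MvPolynomial (Fin 2) ℝ,
      Dx (toRF q) = toRF (pderiv 0 q) -
        (toRF (pderiv 0 P) / toRF (pderiv 1 P)) * toRF (pderiv 1 q))
    (hDy : ∀ q : MvPolynomial (Fin 2) ℝ,
      Dy (toRF q) = toRF (pderiv 1 q) -
        (toRF (pderiv 1 P) / toRF (pderiv 0 P)) * toRF (pderiv 0 q)) :
    ∀ j : ℕ, 1 ≤ j →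
      ∃ Qxj Qyj : MvPolynomial (Fin 2) ℝ,
        Dx^[j] (toRF Q) = toRF Qxj / (toRF (pderiv 1 P)) ^ (2 * j - 1) ∧
        Qxj.totalDegree ≤ Q.totalDegree + 2 * d * j ∧
        Dy^[j] (toRF Q) = toRF Qyj / (toRF (pderiv 0 P)) ^ (2 * j - 1) ∧
        Qyj.totalDegree ≤ Q.totalDegree + 2 * d * j := by
  intro j hj
  obtain ⟨n, rfl⟩ := Nat.exists_eq_add_of_le' hj
  have htoRF : ∀ {p}, p ≠ 0 → toRF p ≠ 0 := fun hp =>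
    (map_ne_zero_iff _ (IsFractionRing.injective _ RatFunc2)).mpr hp
  obtain ⟨Qxj, hx, hxdeg⟩ := exists_iterate_succ_eq_div_pow toRF (htoRF hPy) hDxMul hDx Q n
  obtain ⟨Qyj, hy, hydeg⟩ := exists_iterate_succ_eq_div_pow toRF (htoRF hPx) hDyMul hDy Q n
  have hexp : 2 * (n + 1) - 1 = 2 * n + 1 := by omega
  subst hd
  exact ⟨Qxj, Qyj, hexp ▸ hx, hxdeg, hexp ▸ hy, hydeg⟩

theorem iterated_Lx_Ly_denominator_and_degree_bound
    (P : MvPolynomial (Fin 2) ℝ) (d : ℕ) (hd : d = P.totalDegree) (hd1 : 1 ≤ d)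
    (hPx : pderiv 0 P ≠ 0) (hPy : pderiv 1 P ≠ 0)
    (Q : MvPolynomial (Fin 2) ℝ)
    (Dx Dy : RatFunc2 → RatFunc2)
    -- `Dx` and `Dy` are derivations of `ℝ(x,y)` …
    (hDxAdd : ∀ a b, Dx (a + b) = Dx a + Dx b)
    (hDxMul : ∀ a b, Dx (a * b) = a * Dx b + Dx a * b)
    (hDyAdd : ∀ a b, Dy (a + b) = Dy a + Dy b)
    (hDyMul : ∀ a b, Dy (a * b) = a * Dy b + Dy a * b)
    -- … which act on polynomials as `L_x = ∂/∂x - (P_x/P_y) ∂/∂y` and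
    -- `L_y = ∂/∂y - (P_y/P_x) ∂/∂x` respectively:
    (hDx : ∀ q : MvPolynomial (Fin 2) ℝ,
      Dx (toRF q) = toRF (pderiv 0 q) -
        (toRF (pderiv 0 P) / toRF (pderiv 1 P)) * toRF (pderiv 1 q))
    (hDy : ∀ q : MvPolynomial (Fin 2) ℝ,
      Dy (toRF q) = toRF (pderiv 1 q) -
        (toRF (pderiv 1 P) / toRF (pderiv 0 P)) * toRF (pderiv 0 q)) :
    ∀ j : ℕ, 1 ≤ j →
      ∃ Qxj Qyj : MvPolynomial (Fin 2) ℝ,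
        Dx^[j] (toRF Q) = toRF Qxj / (toRF (pderiv 1 P)) ^ (2 * j - 1) ∧
        Qxj.totalDegree ≤ Q.totalDegree + 2 * d * j ∧
        Dy^[j] (toRF Q) = toRF Qyj / (toRF (pderiv 0 P)) ^ (2 * j - 1) ∧
        Qyj.totalDegree ≤ Q.totalDegree + 2 * d * j :=
  iterated_Lx_Ly_denominator_and_degree_bound_general P d hd hPx hPy Q Dx Dy hDxMul hDyMul hDx hDy
end

section
/- (Pólya's theorem) Let a < b be reals and let f_1,…,f_μ : (a,b) → ℝ be real analytic functions. For j = 1,…,μ let W_j : (a,b) → ℝ be the partial Wronskian W_j = det((f_m)^{(i−1)})_{1≤i,m≤j}, and suppose that W_j(t) ≠ 0 for all t ∈ (a,b) and all j = 1,…,μ. Then for every (c_1,…,c_μ) ∈ ℝ^μ with not all c_i zero, the function c_1 f_1 + ⋯ + c_μ f_μ has at most μ − 1 zeros in (a,b). -/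
/-!
Induction on `μ`. The first leading Wronskian is `f₁` itself, so `f₁` has no zeros and the zeros
of `∑ cₘ fₘ` are those of `H = c₁ + ∑_{m ≥ 2} cₘ fₘ / f₁`. By Rolle's theorem `H'`, a combination of
the functions `(fₘ / f₁)'` with coefficients `c₂, …, c_μ` (not all zero unless `H` is a nonzero
constant), vanishes between any two consecutive zeros of `H`. The identity
`W(f₁, …, fⱼ) = f₁ ^ j · W((f₂ / f₁)', …, (fⱼ / f₁)')`, which comes from the Leibniz rule and an
expansion along the first column, shows that the new system of `μ - 1` functions again has
nonvanishing leading Wronskians, so `H'` has at most `μ - 2` zeros.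
-/

open Finset Filter Topology Set
open scoped ContDiff

section Wronskian

variable {𝕜 : Type*} [NontriviallyNormedField 𝕜]

noncomputable def wronskian {n : ℕ} (f : Fin n → 𝕜 → 𝕜) (x : 𝕜) : 𝕜 :=
  (Matrix.of fun i m : Fin n => iteratedDeriv i (f m) x).det

theorem wronskian_congr {n : ℕ} {f g : Fin n → 𝕜 → 𝕜} {x : 𝕜} (h : ∀ m, f m =ᶠ[𝓝 x] g m) :
    wronskian f x = wronskian g x := by
  unfold wronskian
  congr 1
  ext i m
  exact (h m).iteratedDeriv_eq i

theorem wronskian_mul_left {n : ℕ} {u : 𝕜 → 𝕜} {f : Fin n → 𝕜 → 𝕜} {x : 𝕜}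
    (hu : ContDiffAt 𝕜 n u x) (hf : ∀ m, ContDiffAt 𝕜 n (f m) x) :
    wronskian (fun m => u * f m) x = u x ^ n * wronskian f x := by
  set L : Matrix (Fin n) (Fin n) 𝕜 :=
    Matrix.of fun i k => ((i : ℕ).choose k : 𝕜) * iteratedDeriv (i - k) u x
  have hL : L.IsLowerTriangular := fun i k hik => by
    simp [L, Nat.choose_eq_zero_of_lt (show (i : ℕ) < k from hik)]
  have hleibniz : (Matrix.of fun i m : Fin n => iteratedDeriv i (u * f m) x) =
      L * Matrix.of fun i m : Fin n => iteratedDeriv i (f m) x := by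
    ext i m
    have hi : ((i : ℕ) : WithTop ℕ∞) ≤ n := by exact_mod_cast i.is_le'
    rw [Matrix.of_apply, mul_comm u, iteratedDeriv_mul ((hf m).of_le hi) (hu.of_le hi),
      Matrix.mul_apply]
    simp only [L, Matrix.of_apply]
    rw [Fin.sum_univ_eq_sum_range
        (fun k => ((i : ℕ).choose k : 𝕜) * iteratedDeriv (i - k) u x * iteratedDeriv k (f m) x),
      ← Finset.sum_subset (range_subset_range.2 i.is_lt) fun k _ hk => by
        simp [Nat.choose_eq_zero_of_lt (not_lt.1 (mem_range.not.1 hk))]]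
    exact Finset.sum_congr rfl fun k _ => by ring
  rw [wronskian, hleibniz, Matrix.det_mul, Matrix.det_of_isLowerTriangular L hL, wronskian]
  simp [L]

theorem wronskian_cons_one {n : ℕ} (g : Fin n → 𝕜 → 𝕜) (x : 𝕜) :
    wronskian (Fin.cons 1 g : Fin (n + 1) → 𝕜 → 𝕜) x = wronskian (fun m => deriv (g m)) x := by
  rw [wronskian, Matrix.det_succ_column_zero, Fin.sum_univ_succ, Finset.sum_eq_zero]
  · simp [wronskian, Matrix.submatrix, iteratedDeriv_succ']
  · intro i _
    simp [Pi.one_def, iteratedDeriv_const]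

theorem wronskian_eq_pow_mul_wronskian_deriv_div {n : ℕ} {f : Fin (n + 1) → 𝕜 → 𝕜} {x : 𝕜}
    (hf : ∀ m, ContDiffAt 𝕜 (n + 1) (f m) x) (h0 : f 0 x ≠ 0) :
    wronskian f x = f 0 x ^ (n + 1) * wronskian (fun m => deriv fun t => f m.succ t / f 0 t) x := by
  set q : Fin (n + 1) → 𝕜 → 𝕜 := Fin.cons 1 fun m t => f m.succ t / f 0 t
  have hq : ∀ m, ContDiffAt 𝕜 (n + 1) (q m) x :=
    Fin.cases contDiffAt_const fun m => (hf m.succ).div (hf 0) h0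
  have hfq : ∀ m, f m =ᶠ[𝓝 x] f 0 * q m := by
    refine Fin.cases (by simp [q]) fun m => ?_
    filter_upwards [(hf 0).continuousAt.eventually_ne h0] with t ht
    simp [q, mul_div_cancel₀ _ ht]
  rw [wronskian_congr hfq, wronskian_mul_left (by exact_mod_cast hf 0) (by exact_mod_cast hq),
    wronskian_cons_one]

def LeadingWronskiansNeZero {μ : ℕ} (f : Fin μ → 𝕜 → 𝕜) (s : Set 𝕜) : Prop :=
  ∀ j (hj : j ≤ μ), ∀ t ∈ s, wronskian (fun m : Fin j => f (Fin.castLE hj m)) t ≠ 0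

end Wronskian

namespace LeadingWronskiansNeZero

variable {𝕜 : Type*} [NontriviallyNormedField 𝕜] {μ : ℕ} {f : Fin (μ + 1) → 𝕜 → 𝕜} {s : Set 𝕜}

theorem head_ne_zero (hW : LeadingWronskiansNeZero f s) {t : 𝕜} (ht : t ∈ s) : f 0 t ≠ 0 := by
  simpa [wronskian] using hW 1 (by omega) t ht

theorem deriv_div_head (hs : IsOpen s) (hf : ∀ m, ContDiffOn 𝕜 ∞ (f m) s)
    (hW : LeadingWronskiansNeZero f s) :
    LeadingWronskiansNeZero (fun m => deriv fun t => f m.succ t / f 0 t) s := by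
  intro j hj t ht
  have hWj := hW (j + 1) (by omega) t ht
  rw [wronskian_eq_pow_mul_wronskian_deriv_div (f := fun m : Fin (j + 1) => f (Fin.castLE _ m))
    (fun m => ((hf _).contDiffAt (hs.mem_nhds ht)).of_le (by exact_mod_cast le_top))
    (hW.head_ne_zero ht)] at hWj
  exact right_ne_zero_of_mul hWj

end LeadingWronskiansNeZero

theorem exists_finset_deriv_eq_zero {h : ℝ → ℝ} {s : Set ℝ} (hs : s.OrdConnected)
    (hh : ContinuousOn h s) {Z : Finset ℝ} (hZ : ∀ t ∈ Z, t ∈ s ∧ h t = 0) :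
    ∃ T : Finset ℝ, (∀ t ∈ T, t ∈ s ∧ deriv h t = 0) ∧ Z.card ≤ T.card + 1 := by
  classical
  have hrolle : ∀ x ∈ Z, ∀ y ∈ Z, x < y → ∃ z ∈ Ioo x y, deriv h z = 0 := fun x hx y hy hxy =>
    exists_deriv_eq_zero hxy (hh.mono (hs.out (hZ x hx).1 (hZ y hy).1))
      ((hZ x hx).2.trans (hZ y hy).2.symm)
  choose! z hz using hrolle
  refine ⟨((Z ×ˢ Z).filter fun p => p.1 < p.2).image fun p => z p.1 p.2, ?_,
    card_le_of_interleaved fun x hx y hy hxy _ =>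
      ⟨z x y, Finset.mem_image_of_mem (fun p : ℝ × ℝ => z p.1 p.2) (a := (x, y))
        (by simp [hx, hy, hxy]), (hz x hx y hy hxy).1⟩⟩
  simp only [Finset.mem_image, Finset.mem_filter, Finset.mem_product]
  rintro _ ⟨⟨x, y⟩, ⟨⟨hx, hy⟩, hxy⟩, rfl⟩
  exact ⟨hs.out (hZ x hx).1 (hZ y hy).1 (Ioo_subset_Icc_self (hz x hx y hy hxy).1),
    (hz x hx y hy hxy).2⟩

theorem Set.finite_and_ncard_lt_of_forall_finset_card_lt {α : Type*} {s : Set α} {n : ℕ}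
    (h : ∀ T : Finset α, ↑T ⊆ s → T.card < n) : s.Finite ∧ s.ncard < n := by
  have hfin : s.Finite := by
    by_contra hinf
    obtain ⟨T, hTs, hTcard⟩ := Set.Infinite.exists_subset_card_eq hinf n
    exact (h T hTs).ne hTcard
  refine ⟨hfin, ?_⟩
  rw [Set.ncard_eq_toFinset_card s hfin]
  exact h _ (by simp)

theorem card_lt_of_leadingWronskiansNeZero {s : Set ℝ} (hs : IsOpen s) (hs' : s.OrdConnected) :
    ∀ {μ : ℕ} {f : Fin μ → ℝ → ℝ}, (∀ m, ContDiffOn ℝ ∞ (f m) s) →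
      LeadingWronskiansNeZero f s → ∀ {c : Fin μ → ℝ}, c ≠ 0 → ∀ {Z : Finset ℝ},
      (∀ t ∈ Z, t ∈ s ∧ ∑ m, c m * f m t = 0) → Z.card < μ
  | 0, _, _, _, c, hc, _, _ => absurd (Subsingleton.elim c 0) hc
  | μ + 1, f, hf, hW, c, hc, Z, hZ => by
    have hf0 : ∀ t ∈ s, f 0 t ≠ 0 := fun t ht => hW.head_ne_zero ht
    have hq : ∀ m : Fin μ, ContDiffOn ℝ ∞ (fun t => f m.succ t / f 0 t) s :=
      fun m => (hf m.succ).div (hf 0) hf0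
    by_cases hd : (fun m : Fin μ => c m.succ) = 0
    · have hc0 : c 0 ≠ 0 := fun h0 => hc (funext (Fin.cases h0 (congrFun hd)))
      suffices Z = ∅ by simp [this]
      refine Finset.eq_empty_of_forall_notMem fun t ht => ?_
      have hsum := (hZ t ht).2
      simp only [Fin.sum_univ_succ, congrFun hd, Pi.zero_apply, zero_mul, sum_const_zero,
        add_zero] at hsum
      exact mul_ne_zero hc0 (hf0 t (hZ t ht).1) hsum
    set H : ℝ → ℝ := fun t => c 0 + ∑ m : Fin μ, c m.succ * (f m.succ t / f 0 t)
    have hH : ∀ t ∈ s, H t * f 0 t = ∑ m, c m * f m t := fun t ht => by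
      simp only [H, Fin.sum_univ_succ, add_mul, sum_mul, mul_assoc, div_mul_cancel₀ _ (hf0 t ht)]
    have hHderiv : ∀ t ∈ s,
        deriv H t = ∑ m : Fin μ, c m.succ * deriv (fun t => f m.succ t / f 0 t) t :=
      fun t ht => by
        have hdiff : ∀ m : Fin μ, DifferentiableAt ℝ (fun t => f m.succ t / f 0 t) t := fun m =>
          ((hq m).contDiffAt (hs.mem_nhds ht)).differentiableAt (by simp)
        simp [H, deriv_fun_sum fun m _ => (hdiff m).const_mul (c m.succ)]
    have hHcont : ContinuousOn H s :=
      continuousOn_const.add <|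
        continuousOn_finsetSum _ fun m _ => continuousOn_const.mul (hq m).continuousOn
    obtain ⟨T, hT, hZT⟩ := exists_finset_deriv_eq_zero hs' hHcont (Z := Z) fun t ht =>
      ⟨(hZ t ht).1, by simpa [hf0 t (hZ t ht).1, ← hH t (hZ t ht).1] using (hZ t ht).2⟩
    have hTμ : T.card < μ := card_lt_of_leadingWronskiansNeZero hs hs'
      (fun m => (hq m).deriv_of_isOpen hs (by simp)) (hW.deriv_div_head hs hf) hd
      fun t ht => ⟨(hT t ht).1, hHderiv t (hT t ht).1 ▸ (hT t ht).2⟩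
    omega

theorem polya_chebyshev_general (μ : ℕ) (a b : ℝ)
    (f : Fin μ → ℝ → ℝ)
    (hanal : ∀ m, AnalyticOnNhd ℝ (f m) (Set.Ioo a b))
    (hW : ∀ j : ℕ, 1 ≤ j → ∀ hj : j ≤ μ, ∀ t ∈ Set.Ioo a b,
      Matrix.det (Matrix.of fun i m : Fin j =>
        iteratedDeriv (i : ℕ) (f (Fin.castLE hj m)) t) ≠ 0) :
    ∀ c : Fin μ → ℝ, c ≠ 0 →
      {t | t ∈ Set.Ioo a b ∧ ∑ m, c m * f m t = 0}.Finite ∧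
      {t | t ∈ Set.Ioo a b ∧ ∑ m, c m * f m t = 0}.ncard ≤ μ - 1 := by
  intro c hc
  have hlead : LeadingWronskiansNeZero f (Ioo a b) := fun j hj t ht => by
    rcases Nat.eq_zero_or_pos j with rfl | hj1
    · simp [wronskian]
    · exact hW j hj1 hj t ht
  obtain ⟨hfin, hcard⟩ := Set.finite_and_ncard_lt_of_forall_finset_card_lt
    (s := {t | t ∈ Ioo a b ∧ ∑ m, c m * f m t = 0}) fun Z hZ =>
    card_lt_of_leadingWronskiansNeZero isOpen_Ioo ordConnected_Ioo
      (fun m => (hanal m).contDiffOn_of_completeSpace) hlead hc fun t ht => hZ ht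
  exact ⟨hfin, by omega⟩

theorem polya_chebyshev (μ : ℕ) (a b : ℝ) (hab : a < b)
    (f : Fin μ → ℝ → ℝ)
    (hanal : ∀ m, AnalyticOnNhd ℝ (f m) (Set.Ioo a b))
    (hW : ∀ j : ℕ, 1 ≤ j → ∀ hj : j ≤ μ, ∀ t ∈ Set.Ioo a b,
      Matrix.det (Matrix.of fun i m : Fin j =>
        iteratedDeriv (i : ℕ) (f (Fin.castLE hj m)) t) ≠ 0) :
    ∀ c : Fin μ → ℝ, c ≠ 0 →
      {t | t ∈ Set.Ioo a b ∧ ∑ m, c m * f m t = 0}.Finite ∧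
      {t | t ∈ Set.Ioo a b ∧ ∑ m, c m * f m t = 0}.ncard ≤ μ - 1 :=
  polya_chebyshev_general μ a b f hanal hW
end
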